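/- arXiv:2603.01200 — 3 statements merged into one kernel-verified Lean document; each statement's English description precedes it below -/
import Mathlib

section
/- Let K̄ and K̃ be compact subsets of ℝⁿ with K̄ contained in the interior of K̃, and let δ, ρ > 0 satisfy |J(x̃ + a s)| + δ ≤ ρ for every x̃ ∈ K̃ and every s in the unit sphere ∂𝔹. Then there exist ω₁, c₁, c₂ > 0 such that for every ω ≥ ω₁, every k ∈ ℕ, every measurable essentially bounded d : ℝ → ℝ with ‖d‖ ≤ δ, every solution (x̃, η) : I → ℝⁿ × ℝ of the transformed closed-loop system, and all t₀ < t₂ in I, the following implication holds: if x̃(t) ∈ K̃ and η(t) ∈ [−ρ, ρ] for every t ∈ [t₀, t₂], then for every t₁ ∈ [t₀, t₂], | x̃(t₁) − x̃(t₀) − ∫_{t₀}^{t₁} ( F̆_k(x̃(t)) + Ĕ_k(η(t)) + d(t) b v_k(ωt) ) dt | ≤ (1/ω)(c₁ + c₂ |t₁ − t₀|). -/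
open MeasureTheory Real Set Filter

noncomputable section

/-- The spherical parametrization `φ : ℝ^{n-1} → ℝⁿ` (angles given as `θ : ℕ → ℝ`;
only the entries `θ 0, …, θ (n-2)` matter).  The first component is
`cos θ₀ ∏_{j=1}^{n-2} sin θ_j`, the second is `sin θ₀ ∏_{j=1}^{n-2} sin θ_j`, and for
`1 ≤ i ≤ n-2` the `(i+2)`-nd component (index `i+1`) is `cos θ_i ∏_{j=i+1}^{n-2} sin θ_j`. -/
def sphParam (n : ℕ) (θ : ℕ → ℝ) : EuclideanSpace ℝ (Fin n) := WithLp.toLp 2 fun m =>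
  if (m : ℕ) = 0 then Real.cos (θ 0) * ∏ j ∈ Finset.Ico 1 (n - 1), Real.sin (θ j)
  else if (m : ℕ) = 1 then Real.sin (θ 0) * ∏ j ∈ Finset.Ico 1 (n - 1), Real.sin (θ j)
  else Real.cos (θ ((m : ℕ) - 1)) * ∏ j ∈ Finset.Ico (m : ℕ) (n - 1), Real.sin (θ j)

/-- `g(θ) = ∏_{j=1}^{n-2} |sin θ_j|^j`, the square root of the Gram determinant of `φ`. -/
def gramG (n : ℕ) (θ : ℕ → ℝ) : ℝ := ∏ j ∈ Finset.Ico 1 (n - 1), |Real.sin (θ j)| ^ j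

/-- The angle dither `θ_k(τ) = (τ, 2^{k-1} τ, 2^{2k-1} τ, …, 2^{(n-2)k-1} τ)`. -/
def ditherAngle (k : ℕ) (τ : ℝ) : ℕ → ℝ := fun j =>
  if j = 0 then τ else 2 ^ (j * k - 1) * τ

/-- The dither signal `U_k = φ ∘ θ_k`. -/
def ditherU (n k : ℕ) (τ : ℝ) : EuclideanSpace ℝ (Fin n) := sphParam n (ditherAngle k τ)

/-- The dither signal `v_k(τ) = g(θ_k(τ)) U_k(τ)`. -/
def ditherV (n k : ℕ) (τ : ℝ) : EuclideanSpace ℝ (Fin n) :=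
  gramG n (ditherAngle k τ) • ditherU n k τ

/-- The closed unit ball `𝔹` of `ℝⁿ`. -/
def unitBall (n : ℕ) : Set (EuclideanSpace ℝ (Fin n)) := Metric.closedBall 0 1

/-- The volume `vol(𝔹)` of the closed unit ball. -/
def volB (n : ℕ) : ℝ := (volume (unitBall n)).toReal

/-- The averaged objective function `J̄_a(x) = (1/vol 𝔹) ∫_𝔹 J(x + aξ) dξ`. -/
def Jbar (n : ℕ) (J : EuclideanSpace ℝ (Fin n) → ℝ) (a : ℝ) (x : EuclideanSpace ℝ (Fin n)) : ℝ :=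
  (volB n)⁻¹ * ∫ ξ in unitBall n, J (x + a • ξ)

/-- The surface measure `λ_{∂𝔹}` on the unit sphere of `ℝⁿ`. -/
def sphereMeasure (n : ℕ) : Measure (Metric.sphere (0 : EuclideanSpace ℝ (Fin n)) 1) :=
  (volume : Measure (EuclideanSpace ℝ (Fin n))).toSphere

/-- The constant `c = vol(𝔹)/(2π^{n-1})`. -/
def cConst (n : ℕ) : ℝ := volB n / (2 * π ^ (n - 1))

/-- The averaged vector field `F̆_k(x) = (b/2π) ∫₀^{2π} J(x + a φ(θ_k τ)) g(θ_k τ) φ(θ_k τ) dτ`. -/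
def Fbreve (n : ℕ) (J : EuclideanSpace ℝ (Fin n) → ℝ) (a b : ℝ) (k : ℕ)
    (x : EuclideanSpace ℝ (Fin n)) : EuclideanSpace ℝ (Fin n) :=
  (b / (2 * π)) • ∫ τ in (0:ℝ)..(2 * π),
    (J (x + a • sphParam n (ditherAngle k τ)) * gramG n (ditherAngle k τ)) •
      sphParam n (ditherAngle k τ)

/-- The averaged map `Ĕ_k(η) = -(b/2π) η ∫₀^{2π} g(θ_k τ) φ(θ_k τ) dτ`. -/
def Ebreve (n : ℕ) (b : ℝ) (k : ℕ) (η : ℝ) : EuclideanSpace ℝ (Fin n) :=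
  (-(b / (2 * π)) * η) •
    ∫ τ in (0:ℝ)..(2 * π), gramG n (ditherAngle k τ) • sphParam n (ditherAngle k τ)

/-- A (locally absolutely continuous) solution, in integral form, of the transformed
closed-loop system `x̃' = (J(x̃ + a U_k(ωt)) - η + d t)·b·v_k(ωt)`,
`η' = -h η + h J(x̃ + a U_k(ωt)) + h d t` on the interval `I`. -/
def IsTransSol (n : ℕ) (J : EuclideanSpace ℝ (Fin n) → ℝ) (a b h ω : ℝ) (k : ℕ)
    (d : ℝ → ℝ) (I : Set ℝ) (x : ℝ → EuclideanSpace ℝ (Fin n)) (η : ℝ → ℝ) : Prop :=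
  I.OrdConnected ∧ ContinuousOn x I ∧ ContinuousOn η I ∧
  ∀ t₀ ∈ I, ∀ t₁ ∈ I,
    IntervalIntegrable (fun s =>
      ((J (x s + a • ditherU n k (ω * s)) - η s + d s) * b) • ditherV n k (ω * s))
      volume t₀ t₁ ∧
    IntervalIntegrable (fun s =>
      -h * η s + h * J (x s + a • ditherU n k (ω * s)) + h * d s) volume t₀ t₁ ∧
    x t₁ = x t₀ + ∫ s in t₀..t₁,
      ((J (x s + a • ditherU n k (ω * s)) - η s + d s) * b) • ditherV n k (ω * s) ∧
    η t₁ = η t₀ + ∫ s in t₀..t₁,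
      (-h * η s + h * J (x s + a • ditherU n k (ω * s)) + h * d s)

/-- A (locally absolutely continuous) solution, in integral form, of the gradient system
`x̄' = κ ∇J̄_a(x̄) + f t` on the interval `I`. -/
def IsGradSol (n : ℕ) (J : EuclideanSpace ℝ (Fin n) → ℝ) (a κ : ℝ)
    (f : ℝ → EuclideanSpace ℝ (Fin n)) (I : Set ℝ)
    (x : ℝ → EuclideanSpace ℝ (Fin n)) : Prop :=
  I.OrdConnected ∧ ContinuousOn x I ∧
  ∀ t₀ ∈ I, ∀ t₁ ∈ I,
    IntervalIntegrable (fun s => κ • gradient (Jbar n J a) (x s) + f s) volume t₀ t₁ ∧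
    x t₁ = x t₀ + ∫ s in t₀..t₁, (κ • gradient (Jbar n J a) (x s) + f s)

/-- The unit cube `[0,1]^d`. -/
def cube (d : ℕ) : Set (EuclideanSpace ℝ (Fin d)) := {z | ∀ j, z j ∈ Icc (0:ℝ) 1}

/-- The curve `γ_k(σ) = (saw σ, saw (2^k σ), …, saw (2^{(d-1)k} σ))`,
where `saw` is the sawtooth wave `σ ↦ σ - ⌊σ⌋`. -/
def gammaCurve (d k : ℕ) (σ : ℝ) : EuclideanSpace ℝ (Fin d) :=
  WithLp.toLp 2 fun j => Int.fract (2 ^ ((j : ℕ) * k) * σ)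

/-- The modulus of continuity of `f` on `[0,1]^d` of order `ε`
(with respect to the Euclidean norm). -/
def modCont (d : ℕ) (f : EuclideanSpace ℝ (Fin d) → ℝ) (ε : ℝ) : ℝ :=
  sSup {r | ∃ z ∈ cube d, ∃ ζ ∈ cube d, ‖z - ζ‖ ≤ ε ∧ r = |f z - f ζ|}

/-- Extension of a `d`-tuple to a function `ℕ → ℝ` (by zero). -/
def padTo (d : ℕ) (z : EuclideanSpace ℝ (Fin d)) : ℕ → ℝ :=
  fun j => if h : j < d then z ⟨j, h⟩ else 0

/-- The map `Θ(z) = π (2 z₀, z₁, …, z_{n-2})`. -/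
def ThetaMap (z : ℕ → ℝ) : ℕ → ℝ := fun j => if j = 0 then 2 * π * z 0 else π * z j

/-- `W = (0,2π) × (0,π)^{n-2}`. -/
def Wset (n : ℕ) : Set (EuclideanSpace ℝ (Fin (n-1))) :=
  {θ | ∀ j : Fin (n-1), θ j ∈ Ioo 0 (if (j : ℕ) = 0 then 2 * π else π)}

/-- `2W = (0,4π) × (0,2π)^{n-2}`. -/
def W2set (n : ℕ) : Set (EuclideanSpace ℝ (Fin (n-1))) :=
  {θ | ∀ j : Fin (n-1), θ j ∈ Ioo 0 (if (j : ℕ) = 0 then 4 * π else 2 * π)}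

/-- A class-`𝒦` function: continuous and strictly increasing on `[0,∞)` with `γ 0 = 0`. -/
def IsClassK (γ : ℝ → ℝ) : Prop :=
  ContinuousOn γ (Ici 0) ∧ StrictMonoOn γ (Ici 0) ∧ γ 0 = 0

/-- A class-`𝒦∞` function. -/
def IsClassKInf (α : ℝ → ℝ) : Prop := IsClassK α ∧ Tendsto α atTop atTop

/-- A class-`𝒦ℒ` function. -/
def IsClassKL (β : ℝ → ℝ → ℝ) : Prop :=
  (∀ t ≥ (0 : ℝ), IsClassK fun s => β s t) ∧
  ∀ s ≥ (0 : ℝ), AntitoneOn (β s) (Ici 0) ∧ Tendsto (β s) atTop (nhds 0)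

/-- The `L∞` (essential supremum) norm of a function on `ℝ`. -/
def LinfNorm {F : Type*} [NormedAddCommGroup F] (d : ℝ → F) : ℝ :=
  (eLpNorm d ⊤ volume).toReal

/-- `d` is (a.e. strongly) measurable and essentially bounded with `‖d‖_∞ ≤ δ`. -/
def IsEssBdd {F : Type*} [NormedAddCommGroup F] (d : ℝ → F) (δ : ℝ) : Prop :=
  AEStronglyMeasurable d volume ∧ eLpNorm d ⊤ volume ≤ ENNReal.ofReal δ


/-! ### Auxiliary lemmas for the proof of `statement3` -/

section Statement3Aux

lemma abs_prod_sin_le_one (θ : ℕ → ℝ) (A B : ℕ) :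
    |∏ j ∈ Finset.Ico A B, Real.sin (θ j)| ≤ 1 := by
  rw [Finset.abs_prod]
  exact Finset.prod_le_one (fun i _ => abs_nonneg _) (fun i _ => Real.abs_sin_le_one _)

lemma abs_sphParam_le (n : ℕ) (θ : ℕ → ℝ) (m : Fin n) : |sphParam n θ m| ≤ 1 := by
  unfold sphParam
  rw [PiLp.toLp_apply]
  split_ifs <;> rw [abs_mul]
  · exact mul_le_one₀ (Real.abs_cos_le_one _) (abs_nonneg _) (abs_prod_sin_le_one θ _ _)
  · exact mul_le_one₀ (Real.abs_sin_le_one _) (abs_nonneg _) (abs_prod_sin_le_one θ _ _)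
  · exact mul_le_one₀ (Real.abs_cos_le_one _) (abs_nonneg _) (abs_prod_sin_le_one θ _ _)

lemma norm_sphParam_le (n : ℕ) (θ : ℕ → ℝ) : ‖sphParam n θ‖ ≤ Real.sqrt n := by
  rw [EuclideanSpace.norm_eq]
  apply Real.sqrt_le_sqrt
  calc ∑ i, ‖sphParam n θ i‖ ^ 2 ≤ ∑ _i : Fin n, (1 : ℝ) := by
        refine Finset.sum_le_sum fun i _ => ?_
        rw [Real.norm_eq_abs, ← one_pow 2]
        exact pow_le_pow_left₀ (abs_nonneg _) (abs_sphParam_le n θ i) 2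
    _ = n := by simp

lemma gramG_nonneg (n : ℕ) (θ : ℕ → ℝ) : 0 ≤ gramG n θ :=
  Finset.prod_nonneg fun i _ => pow_nonneg (abs_nonneg _) _

lemma gramG_le_one (n : ℕ) (θ : ℕ → ℝ) : gramG n θ ≤ 1 :=
  Finset.prod_le_one (fun i _ => pow_nonneg (abs_nonneg _) _)
    (fun i _ => pow_le_one₀ (abs_nonneg _) (Real.abs_sin_le_one _))

lemma norm_ditherU_le (n k : ℕ) (τ : ℝ) : ‖ditherU n k τ‖ ≤ Real.sqrt n :=
  norm_sphParam_le n _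

lemma norm_ditherV_le (n k : ℕ) (τ : ℝ) : ‖ditherV n k τ‖ ≤ Real.sqrt n := by
  unfold ditherV
  rw [norm_smul, Real.norm_eq_abs, abs_of_nonneg (gramG_nonneg _ _)]
  calc gramG n (ditherAngle k τ) * ‖ditherU n k τ‖ ≤ 1 * Real.sqrt n :=
        mul_le_mul (gramG_le_one _ _) (norm_ditherU_le n k τ) (norm_nonneg _) one_pos.le
    _ = Real.sqrt n := one_mul _

lemma continuous_ditherAngle (k j : ℕ) : Continuous fun τ => ditherAngle k τ j := by
  by_cases hj : j = 0 <;> simp only [ditherAngle, hj, if_true, if_false] <;> fun_prop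

lemma continuous_ditherU (n k : ℕ) : Continuous (ditherU n k) := by
  have hs : ∀ j, Continuous fun τ => Real.sin (ditherAngle k τ j) :=
    fun j => Real.continuous_sin.comp (continuous_ditherAngle k j)
  have hc : ∀ j, Continuous fun τ => Real.cos (ditherAngle k τ j) :=
    fun j => Real.continuous_cos.comp (continuous_ditherAngle k j)
  unfold ditherU sphParam
  refine (PiLp.continuous_toLp 2 fun _ : Fin n => ℝ).comp (continuous_pi fun m => ?_)
  refine Continuous.if_const _ ((hc 0).mul (continuous_finset_prod _ fun j _ => hs j))
    (Continuous.if_const _ ((hs 0).mul (continuous_finset_prod _ fun j _ => hs j))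
      ((hc _).mul (continuous_finset_prod _ fun j _ => hs j)))

lemma continuous_gramG_dither (n k : ℕ) : Continuous fun τ => gramG n (ditherAngle k τ) := by
  unfold gramG
  exact continuous_finset_prod _ fun j _ =>
    ((Real.continuous_sin.comp (continuous_ditherAngle k j)).abs).pow j

lemma continuous_ditherV (n k : ℕ) : Continuous (ditherV n k) :=
  (continuous_gramG_dither n k).smul (continuous_ditherU n k)

lemma dither_sin_per (k j : ℕ) (τ : ℝ) :
    Real.sin (ditherAngle k (τ + 2 * π) j) = Real.sin (ditherAngle k τ j) := by
  unfold ditherAngle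
  by_cases hj : j = 0
  · simp [hj, Real.sin_add_two_pi]
  · simp only [if_neg hj]
    have h2 : (2 : ℝ) ^ (j * k - 1) = ((2 ^ (j * k - 1) : ℕ) : ℝ) := by push_cast; ring
    rw [mul_add, h2, Real.sin_add_nat_mul_two_pi]

lemma dither_cos_per (k j : ℕ) (τ : ℝ) :
    Real.cos (ditherAngle k (τ + 2 * π) j) = Real.cos (ditherAngle k τ j) := by
  unfold ditherAngle
  by_cases hj : j = 0
  · simp [hj, Real.cos_add_two_pi]
  · simp only [if_neg hj]
    have h2 : (2 : ℝ) ^ (j * k - 1) = ((2 ^ (j * k - 1) : ℕ) : ℝ) := by push_cast; ring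
    rw [mul_add, h2, Real.cos_add_nat_mul_two_pi]

lemma ditherU_per (n k : ℕ) : Function.Periodic (ditherU n k) (2 * π) := by
  intro τ
  ext m
  simp only [ditherU, sphParam, PiLp.toLp_apply, dither_sin_per, dither_cos_per]

lemma gramG_dither_per (n k : ℕ) (τ : ℝ) :
    gramG n (ditherAngle k (τ + 2 * π)) = gramG n (ditherAngle k τ) := by
  simp only [gramG, dither_sin_per]

lemma ditherV_per (n k : ℕ) : Function.Periodic (ditherV n k) (2 * π) := by
  intro τ
  simp only [ditherV]
  rw [ditherU_per n k τ, gramG_dither_per n k τ]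

def Gfun (n : ℕ) (J : EuclideanSpace ℝ (Fin n) → ℝ) (a b : ℝ) (k : ℕ)
    (p : EuclideanSpace ℝ (Fin n) × ℝ) (τ : ℝ) : EuclideanSpace ℝ (Fin n) :=
  ((J (p.1 + a • ditherU n k τ) - p.2) * b) • ditherV n k τ

def meanG (n : ℕ) (J : EuclideanSpace ℝ (Fin n) → ℝ) (a b : ℝ) (k : ℕ)
    (p : EuclideanSpace ℝ (Fin n) × ℝ) : EuclideanSpace ℝ (Fin n) :=
  (2 * π)⁻¹ • ∫ τ in (0:ℝ)..(2 * π), Gfun n J a b k p τ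

variable {n k : ℕ} {J : EuclideanSpace ℝ (Fin n) → ℝ} {a b : ℝ}

lemma continuous_Gfun_uncurry (hJ : Continuous J) :
    Continuous (Function.uncurry (Gfun n J a b k)) := by
  unfold Gfun Function.uncurry
  refine Continuous.fun_smul (Continuous.fun_mul (Continuous.fun_sub ?_ ?_) continuous_const)
    ((continuous_ditherV n k).comp continuous_snd)
  · exact hJ.comp ((continuous_fst.comp continuous_fst).add
      (((continuous_ditherU n k).comp continuous_snd).const_smul a))
  · exact continuous_snd.comp continuous_fst

lemma continuous_Gfun (hJ : Continuous J) (p : EuclideanSpace ℝ (Fin n) × ℝ) :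
    Continuous (Gfun n J a b k p) :=
  (continuous_Gfun_uncurry hJ).comp (continuous_const.prodMk continuous_id)

lemma continuous_meanG (hJ : Continuous J) : Continuous (meanG n J a b k) := by
  unfold meanG
  exact continuous_const.fun_smul
    (intervalIntegral.continuous_parametric_intervalIntegral_of_continuous' (μ := volume)
      (continuous_Gfun_uncurry hJ) 0 (2 * π))

lemma Gfun_per (p : EuclideanSpace ℝ (Fin n) × ℝ) :
    Function.Periodic (Gfun n J a b k p) (2 * π) := by
  intro τ
  simp only [Gfun]
  rw [ditherU_per n k τ, ditherV_per n k τ]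

lemma meanG_eq (hJ : Continuous J) (x : EuclideanSpace ℝ (Fin n)) (η : ℝ) :
    Fbreve n J a b k x + Ebreve n b k η = meanG n J a b k (x, η) := by
  unfold Fbreve Ebreve meanG Gfun ditherU ditherV
  rw [← intervalIntegral.integral_smul, ← intervalIntegral.integral_smul,
    ← intervalIntegral.integral_smul, ← intervalIntegral.integral_add]
  · refine intervalIntegral.integral_congr fun τ _ => ?_
    simp only [smul_smul, ← add_smul]
    congr 1
    ring
  · refine Continuous.intervalIntegrable ?_ _ _
    exact continuous_const.fun_smul (((hJ.comp (continuous_const.fun_add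
        ((continuous_ditherU n k).const_smul a))).fun_mul
      (continuous_gramG_dither n k)).fun_smul (continuous_ditherU n k))
  · refine Continuous.intervalIntegrable ?_ _ _
    exact continuous_const.fun_smul ((continuous_gramG_dither n k).fun_smul (continuous_ditherU n k))

lemma norm_Gfun_le {M ρ : ℝ} {p : EuclideanSpace ℝ (Fin n) × ℝ} {τ : ℝ} (hb : 0 ≤ b)
    (hM : |J (p.1 + a • ditherU n k τ)| ≤ M) (hρ : |p.2| ≤ ρ) :
    ‖Gfun n J a b k p τ‖ ≤ (M + ρ) * b * Real.sqrt n := by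
  have hM0 : 0 ≤ M := (abs_nonneg _).trans hM
  have hρ0 : 0 ≤ ρ := (abs_nonneg _).trans hρ
  unfold Gfun
  rw [norm_smul, Real.norm_eq_abs, abs_mul, abs_of_nonneg hb]
  have h1 : |J (p.1 + a • ditherU n k τ) - p.2| ≤ M + ρ :=
    (abs_sub _ _).trans (add_le_add hM hρ)
  calc |J (p.1 + a • ditherU n k τ) - p.2| * b * ‖ditherV n k τ‖
      ≤ (M + ρ) * b * Real.sqrt n := by
        apply mul_le_mul (mul_le_mul_of_nonneg_right h1 hb) (norm_ditherV_le n k τ)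
          (norm_nonneg _) (by positivity)

lemma norm_Gfun_sub_le {L : ℝ} {p q : EuclideanSpace ℝ (Fin n) × ℝ} {τ : ℝ} (hb : 0 ≤ b)
    (hJd : |J (p.1 + a • ditherU n k τ) - J (q.1 + a • ditherU n k τ)| ≤ L * ‖p.1 - q.1‖) :
    ‖Gfun n J a b k p τ - Gfun n J a b k q τ‖ ≤
      (L * ‖p.1 - q.1‖ + |p.2 - q.2|) * b * Real.sqrt n := by
  have hL0 : 0 ≤ L * ‖p.1 - q.1‖ := (abs_nonneg _).trans hJd
  unfold Gfun
  rw [← sub_smul, norm_smul, Real.norm_eq_abs]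
  have h1 : |(J (p.1 + a • ditherU n k τ) - p.2) * b - (J (q.1 + a • ditherU n k τ) - q.2) * b|
      ≤ (L * ‖p.1 - q.1‖ + |p.2 - q.2|) * b := by
    have : (J (p.1 + a • ditherU n k τ) - p.2) * b - (J (q.1 + a • ditherU n k τ) - q.2) * b
        = ((J (p.1 + a • ditherU n k τ) - J (q.1 + a • ditherU n k τ)) - (p.2 - q.2)) * b := by
      ring
    rw [this, abs_mul, abs_of_nonneg hb]
    refine mul_le_mul_of_nonneg_right ((abs_sub _ _).trans (add_le_add hJd le_rfl)) hb
  exact mul_le_mul h1 (norm_ditherV_le n k τ) (norm_nonneg _) (by positivity)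

lemma norm_meanG_le {C : ℝ} (hJ : Continuous J) {p : EuclideanSpace ℝ (Fin n) × ℝ}
    (hC : ∀ τ, ‖Gfun n J a b k p τ‖ ≤ C) : ‖meanG n J a b k p‖ ≤ C := by
  have hC0 : 0 ≤ C := (norm_nonneg _).trans (hC 0)
  unfold meanG
  rw [norm_smul, Real.norm_eq_abs, abs_inv, abs_of_pos (by positivity : (0:ℝ) < 2 * π)]
  have h1 : ‖∫ τ in (0:ℝ)..(2 * π), Gfun n J a b k p τ‖ ≤ C * |2 * π - 0| :=
    intervalIntegral.norm_integral_le_of_norm_le_const fun τ _ => hC τ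
  rw [sub_zero, abs_of_pos (by positivity : (0:ℝ) < 2 * π)] at h1
  calc (2 * π)⁻¹ * ‖∫ τ in (0:ℝ)..(2 * π), Gfun n J a b k p τ‖
      ≤ (2 * π)⁻¹ * (C * (2 * π)) := by
        exact mul_le_mul_of_nonneg_left h1 (by positivity)
    _ = C := by field_simp

lemma norm_meanG_sub_le {C : ℝ} (hJ : Continuous J) {p q : EuclideanSpace ℝ (Fin n) × ℝ}
    (hC : ∀ τ, ‖Gfun n J a b k p τ - Gfun n J a b k q τ‖ ≤ C) :
    ‖meanG n J a b k p - meanG n J a b k q‖ ≤ C := by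
  have hC0 : 0 ≤ C := (norm_nonneg _).trans (hC 0)
  unfold meanG
  rw [← smul_sub, ← intervalIntegral.integral_sub
    ((continuous_Gfun hJ p).intervalIntegrable _ _) ((continuous_Gfun hJ q).intervalIntegrable _ _),
    norm_smul, Real.norm_eq_abs, abs_inv, abs_of_pos (by positivity : (0:ℝ) < 2 * π)]
  have h1 : ‖∫ τ in (0:ℝ)..(2 * π), (Gfun n J a b k p τ - Gfun n J a b k q τ)‖
      ≤ C * |2 * π - 0| :=
    intervalIntegral.norm_integral_le_of_norm_le_const fun τ _ => hC τ
  rw [sub_zero, abs_of_pos (by positivity : (0:ℝ) < 2 * π)] at h1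
  calc (2 * π)⁻¹ * ‖∫ τ in (0:ℝ)..(2 * π), (Gfun n J a b k p τ - Gfun n J a b k q τ)‖
      ≤ (2 * π)⁻¹ * (C * (2 * π)) := mul_le_mul_of_nonneg_left h1 (by positivity)
    _ = C := by field_simp

lemma integral_Gfun_period {ω : ℝ} (hω : ω ≠ 0) (p : EuclideanSpace ℝ (Fin n) × ℝ) (s : ℝ) :
    ∫ t in s..(s + 2 * π / ω), Gfun n J a b k p (ω * t) = (2 * π / ω) • meanG n J a b k p := by
  rw [intervalIntegral.integral_comp_mul_left (Gfun n J a b k p) hω]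
  have h1 : ω * (s + 2 * π / ω) = ω * s + 2 * π := by field_simp
  rw [h1, (Gfun_per p).intervalIntegral_add_eq (ω * s) 0, zero_add]
  unfold meanG
  rw [smul_smul]
  congr 1
  have hπ : (2 : ℝ) * π ≠ 0 := by positivity
  field_simp

end Statement3Aux

set_option maxHeartbeats 1000000 in
/-- Lemma 1: averaging estimate for large `ω`. -/
theorem statement3 (n : ℕ) (hn : 2 ≤ n) (J : EuclideanSpace ℝ (Fin n) → ℝ)
    (hJ : ContDiff ℝ (⊤ : ℕ∞) J) (a b h : ℝ) (ha : 0 < a) (hb : 0 < b) (hh : 0 < h)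
    (Kbar Ktil : Set (EuclideanSpace ℝ (Fin n)))
    (hKbar : IsCompact Kbar) (hKtil : IsCompact Ktil) (hsub : Kbar ⊆ interior Ktil)
    (δ ρ : ℝ) (hδ : 0 < δ) (hρ : 0 < ρ)
    (hbound : ∀ x ∈ Ktil, ∀ s ∈ Metric.sphere (0 : EuclideanSpace ℝ (Fin n)) 1,
      |J (x + a • s)| + δ ≤ ρ) :
    ∃ ω₁ c₁ c₂ : ℝ, 0 < ω₁ ∧ 0 < c₁ ∧ 0 < c₂ ∧
      ∀ ω ≥ ω₁, ∀ k : ℕ, 1 ≤ k → ∀ d : ℝ → ℝ, IsEssBdd d δ →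
        ∀ (I : Set ℝ) (x : ℝ → EuclideanSpace ℝ (Fin n)) (η : ℝ → ℝ),
          IsTransSol n J a b h ω k d I x η →
          ∀ t₀ ∈ I, ∀ t₂ ∈ I, t₀ < t₂ →
            (∀ t ∈ Icc t₀ t₂, x t ∈ Ktil ∧ η t ∈ Icc (-ρ) ρ) →
            ∀ t₁ ∈ Icc t₀ t₂,
              ‖x t₁ - x t₀ - ∫ t in t₀..t₁,
                  (Fbreve n J a b k (x t) + Ebreve n b k (η t) +
                    (d t * b) • ditherV n k (ω * t))‖ ≤
                (1 / ω) * (c₁ + c₂ * |t₁ - t₀|) := by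
  classical
  have hJc : Continuous J := hJ.continuous
  have hπ : (0:ℝ) < π := Real.pi_pos
  obtain ⟨R₀, hR₀⟩ := hKtil.isBounded.subset_closedBall 0
  have hnpos : (0:ℝ) < n := by exact_mod_cast (by omega : 0 < n)
  set sq : ℝ := Real.sqrt n with hsqdef
  have hsqpos : 0 < sq := Real.sqrt_pos.mpr hnpos
  set R : ℝ := |R₀| + a * sq + 1 with hRdef
  obtain ⟨M₀, hM₀⟩ := (isCompact_closedBall (0 : EuclideanSpace ℝ (Fin n)) R).exists_bound_of_continuousOn hJc.continuousOn
  obtain ⟨M, hMnn, hM⟩ : ∃ M : ℝ, 0 ≤ M ∧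
      ∀ y ∈ Metric.closedBall (0 : EuclideanSpace ℝ (Fin n)) R, |J y| ≤ M :=
    ⟨max M₀ 0, le_max_right _ _, fun y hy =>
      ((Real.norm_eq_abs (J y)).symm.trans_le (hM₀ y hy)).trans (le_max_left _ _)⟩
  obtain ⟨L₀, hL₀⟩ := (isCompact_closedBall (0 : EuclideanSpace ℝ (Fin n)) R).exists_bound_of_continuousOn
    (hJ.continuous_fderiv (by simp)).norm.continuousOn
  simp only [norm_norm] at hL₀
  obtain ⟨L, hLnn, hL⟩ : ∃ L : ℝ, 0 ≤ L ∧
      ∀ y ∈ Metric.closedBall (0 : EuclideanSpace ℝ (Fin n)) R, ‖fderiv ℝ J y‖ ≤ L :=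
    ⟨max L₀ 0, le_max_right _ _, fun y hy => (hL₀ y hy).trans (le_max_left _ _)⟩
  have hLip : ∀ y ∈ Metric.closedBall (0 : EuclideanSpace ℝ (Fin n)) R,
      ∀ z ∈ Metric.closedBall (0 : EuclideanSpace ℝ (Fin n)) R, |J y - J z| ≤ L * ‖y - z‖ := by
    intro y hy z hz
    have := Convex.norm_image_sub_le_of_norm_fderiv_le (f := J) (C := L)
      (fun u _ => (hJ.differentiable (by simp)).differentiableAt)
      (fun u hu => hL u hu) (convex_closedBall _ _) hz hy
    simpa [Real.norm_eq_abs] using this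
  set M1 : ℝ := (M + ρ) * b * sq with hM1def
  set M2 : ℝ := (M + ρ + δ) * b * sq with hM2def
  set M3 : ℝ := h * (M + ρ + δ) with hM3def
  set LL : ℝ := (L * M2 + M3) * b * sq with hLLdef
  have hM1pos : 0 < M1 := by
    rw [hM1def]; apply mul_pos (mul_pos (by linarith) hb) hsqpos
  have hM2pos : 0 < M2 := by
    rw [hM2def]; apply mul_pos (mul_pos (by linarith) hb) hsqpos
  have hM3pos : 0 < M3 := by
    rw [hM3def]; apply mul_pos hh (by linarith)
  have hLLpos : 0 < LL := by
    rw [hLLdef]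
    apply mul_pos (mul_pos _ hb) hsqpos
    have : 0 ≤ L * M2 := mul_nonneg hLnn hM2pos.le
    linarith
  refine ⟨1, 4 * π * M1, 4 * π * LL, one_pos, by positivity, by positivity, ?_⟩
  intro ω hω k hk d hd I x η hsol t₀ ht₀ t₂ ht₂ ht₀₂ hK t₁ ht₁
  obtain ⟨hIoc, hxc, hηc, hsolint⟩ := hsol
  have hIcc : Icc t₀ t₂ ⊆ I := hIoc.out ht₀ ht₂
  have hωpos : 0 < ω := lt_of_lt_of_le one_pos hω
  set T : ℝ := 2 * π / ω with hTdef
  have hTpos : 0 < T := by rw [hTdef]; positivity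
  have ht₀m : t₀ ∈ Icc t₀ t₂ := ⟨le_rfl, ht₀₂.le⟩
  -- a.e. bound on d
  have hdae : ∀ᵐ u ∂(volume : Measure ℝ), |d u| ≤ δ := by
    have h1 : ∀ᵐ u ∂(volume : Measure ℝ), (‖d u‖₊ : ENNReal) ≤ eLpNormEssSup d volume :=
      ae_le_eLpNormEssSup
    have h2 : eLpNormEssSup d volume ≤ ENNReal.ofReal δ := by
      rw [← eLpNorm_exponent_top]; exact hd.2
    filter_upwards [h1] with u hu
    have h3 : (‖d u‖₊ : ENNReal) ≤ ENNReal.ofReal δ := hu.trans h2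
    rw [← enorm_eq_nnnorm, ← ofReal_norm, ENNReal.ofReal_le_ofReal_iff hδ.le,
      Real.norm_eq_abs] at h3
    exact h3
  -- membership
  have hmem : ∀ u ∈ Icc t₀ t₂, ∀ τ : ℝ,
      x u + a • ditherU n k τ ∈ Metric.closedBall (0 : EuclideanSpace ℝ (Fin n)) R := by
    intro u hu τ
    have h1 : ‖x u‖ ≤ |R₀| := by
      have := hR₀ (hK u hu).1
      rw [Metric.mem_closedBall, dist_zero_right] at this
      exact this.trans (le_abs_self _)
    have h2 : ‖a • ditherU n k τ‖ ≤ a * sq := by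
      rw [norm_smul, Real.norm_eq_abs, abs_of_pos ha]
      exact mul_le_mul_of_nonneg_left (norm_ditherU_le n k τ) ha.le
    rw [Metric.mem_closedBall, dist_zero_right, hRdef]
    calc ‖x u + a • ditherU n k τ‖ ≤ ‖x u‖ + ‖a • ditherU n k τ‖ := norm_add_le _ _
      _ ≤ |R₀| + a * sq + 1 := by linarith
  have hJbd : ∀ u ∈ Icc t₀ t₂, ∀ τ : ℝ, |J (x u + a • ditherU n k τ)| ≤ M :=
    fun u hu τ => hM _ (hmem u hu τ)
  have hηbd : ∀ u ∈ Icc t₀ t₂, |η u| ≤ ρ :=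
    fun u hu => abs_le.mpr ⟨(hK u hu).2.1, (hK u hu).2.2⟩
  have hsubI : ∀ u₁ ∈ Icc t₀ t₂, ∀ u₂ ∈ Icc t₀ t₂, Set.uIoc u₁ u₂ ⊆ Icc t₀ t₂ :=
    fun u₁ h1 u₂ h2 => uIoc_subset_uIcc.trans (uIcc_subset_Icc h1 h2)
  -- integrability of the d-term
  have iDbv : ∀ u₁ u₂ : ℝ, IntervalIntegrable
      (fun t => (d t * b) • ditherV n k (ω * t)) volume u₁ u₂ := by
    intro u₁ u₂
    rw [intervalIntegrable_iff]
    have hgc : Continuous fun u => b • ditherV n k (ω * u) :=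
      continuous_const.fun_smul ((continuous_ditherV n k).comp (continuous_const.mul continuous_id))
    have hg : IntegrableOn (fun u => b • ditherV n k (ω * u)) (Set.uIoc u₁ u₂) volume :=
      intervalIntegrable_iff.mp (hgc.intervalIntegrable u₁ u₂)
    have hdm : MemLp d ⊤ (volume.restrict (Set.uIoc u₁ u₂)) :=
      MemLp.restrict _ ⟨hd.1, lt_of_le_of_lt hd.2 ENNReal.ofReal_lt_top⟩
    have h5 := hg.smul_of_top_right hdm
    exact h5.congr (Eventually.of_forall fun u => by
      simp only [Pi.smul_apply', smul_smul])
  -- integrability of Φ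
  have hfullsplit : ∀ t : ℝ, ((J (x t + a • ditherU n k (ω * t)) - η t + d t) * b) •
        ditherV n k (ω * t)
      = Gfun n J a b k (x t, η t) (ω * t) + (d t * b) • ditherV n k (ω * t) := by
    intro t
    have e : (J (x t + a • ditherU n k (ω * t)) - η t + d t) * b
        = (J (x t + a • ditherU n k (ω * t)) - η t) * b + d t * b := by ring
    rw [e, add_smul]
    rfl
  have iΦ : ∀ u₁ ∈ Icc t₀ t₂, ∀ u₂ ∈ Icc t₀ t₂,
      IntervalIntegrable (fun t => Gfun n J a b k (x t, η t) (ω * t)) volume u₁ u₂ := by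
    intro u₁ h1 u₂ h2
    have h3 := (hsolint u₁ (hIcc h1) u₂ (hIcc h2)).1
    have h5 := h3.sub (iDbv u₁ u₂)
    refine h5.congr (fun t _ => ?_)
    show ((J (x t + a • ditherU n k (ω * t)) - η t + d t) * b) • ditherV n k (ω * t)
        - (d t * b) • ditherV n k (ω * t) = _
    rw [hfullsplit t, add_sub_cancel_right]
  -- continuity & integrability of Ψ
  have hΨc : ContinuousOn (fun t => meanG n J a b k (x t, η t)) (Icc t₀ t₂) :=
    (continuous_meanG hJc).comp_continuousOn ((hxc.mono hIcc).prodMk (hηc.mono hIcc))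
  have iΨ : ∀ u₁ ∈ Icc t₀ t₂, ∀ u₂ ∈ Icc t₀ t₂,
      IntervalIntegrable (fun t => meanG n J a b k (x t, η t)) volume u₁ u₂ :=
    fun u₁ h1 u₂ h2 => (hΨc.mono (uIcc_subset_Icc h1 h2)).intervalIntegrable
  -- Lipschitz estimates
  have hxlip : ∀ u₁ ∈ Icc t₀ t₂, ∀ u₂ ∈ Icc t₀ t₂, ‖x u₂ - x u₁‖ ≤ M2 * |u₂ - u₁| := by
    intro u₁ h1 u₂ h2
    have heq := (hsolint u₁ (hIcc h1) u₂ (hIcc h2)).2.2.1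
    rw [show x u₂ - x u₁ = ∫ s in u₁..u₂,
        ((J (x s + a • ditherU n k (ω * s)) - η s + d s) * b) • ditherV n k (ω * s) by
      rw [heq, add_sub_cancel_left]]
    refine intervalIntegral.norm_integral_le_of_norm_le_const_ae ?_
    filter_upwards [hdae] with u hu huI
    have huIcc : u ∈ Icc t₀ t₂ := hsubI u₁ h1 u₂ h2 huI
    rw [norm_smul, Real.norm_eq_abs, abs_mul, abs_of_pos hb]
    have hJu := hJbd u huIcc (ω * u)
    have hηu := hηbd u huIcc
    have habs : |J (x u + a • ditherU n k (ω * u)) - η u + d u| ≤ M + ρ + δ := by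
      calc |J (x u + a • ditherU n k (ω * u)) - η u + d u|
          ≤ |J (x u + a • ditherU n k (ω * u)) - η u| + |d u| := abs_add_le _ _
        _ ≤ (|J (x u + a • ditherU n k (ω * u))| + |η u|) + |d u| :=
            add_le_add_left (abs_sub _ _) _
        _ ≤ M + ρ + δ := by linarith
    calc |J (x u + a • ditherU n k (ω * u)) - η u + d u| * b * ‖ditherV n k (ω * u)‖
        ≤ (M + ρ + δ) * b * sq := by
          exact mul_le_mul (mul_le_mul_of_nonneg_right habs hb.le) (norm_ditherV_le n k _)
            (norm_nonneg _) (by positivity)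
      _ = M2 := hM2def.symm
  have hηlip : ∀ u₁ ∈ Icc t₀ t₂, ∀ u₂ ∈ Icc t₀ t₂, |η u₂ - η u₁| ≤ M3 * |u₂ - u₁| := by
    intro u₁ h1 u₂ h2
    have heq := (hsolint u₁ (hIcc h1) u₂ (hIcc h2)).2.2.2
    rw [show η u₂ - η u₁ = ∫ s in u₁..u₂,
        (-h * η s + h * J (x s + a • ditherU n k (ω * s)) + h * d s) by
      rw [heq, add_sub_cancel_left], ← Real.norm_eq_abs]
    refine intervalIntegral.norm_integral_le_of_norm_le_const_ae ?_
    filter_upwards [hdae] with u hu huI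
    have huIcc : u ∈ Icc t₀ t₂ := hsubI u₁ h1 u₂ h2 huI
    have hJu := hJbd u huIcc (ω * u)
    have hηu := hηbd u huIcc
    rw [Real.norm_eq_abs, hM3def]
    calc |(-h) * η u + h * J (x u + a • ditherU n k (ω * u)) + h * d u|
        ≤ |(-h) * η u + h * J (x u + a • ditherU n k (ω * u))| + |h * d u| := abs_add_le _ _
      _ ≤ (|(-h) * η u| + |h * J (x u + a • ditherU n k (ω * u))|) + |h * d u| :=
          add_le_add_left (abs_add_le _ _) _
      _ = h * |η u| + h * |J (x u + a • ditherU n k (ω * u))| + h * |d u| := by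
          rw [abs_mul, abs_mul, abs_mul, abs_neg, abs_of_pos hh]
      _ ≤ h * (M + ρ + δ) := by nlinarith
  -- main identity
  have ht₀I := hIcc ht₀m
  have ht₁I := hIcc ht₁
  have hmain : x t₁ - x t₀ - (∫ t in t₀..t₁,
        (meanG n J a b k (x t, η t) + (d t * b) • ditherV n k (ω * t)))
      = ∫ t in t₀..t₁, (Gfun n J a b k (x t, η t) (ω * t) - meanG n J a b k (x t, η t)) := by
    have e1 := (hsolint t₀ ht₀I t₁ ht₁I).2.2.1
    have e2 : (∫ t in t₀..t₁,
          ((J (x t + a • ditherU n k (ω * t)) - η t + d t) * b) • ditherV n k (ω * t))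
        = (∫ t in t₀..t₁, Gfun n J a b k (x t, η t) (ω * t))
          + ∫ t in t₀..t₁, (d t * b) • ditherV n k (ω * t) := by
      rw [← intervalIntegral.integral_add (iΦ t₀ ht₀m t₁ ht₁) (iDbv t₀ t₁)]
      exact intervalIntegral.integral_congr fun t _ => hfullsplit t
    have e3 : (∫ t in t₀..t₁,
          (meanG n J a b k (x t, η t) + (d t * b) • ditherV n k (ω * t)))
        = (∫ t in t₀..t₁, meanG n J a b k (x t, η t))
          + ∫ t in t₀..t₁, (d t * b) • ditherV n k (ω * t) :=
      intervalIntegral.integral_add (iΨ t₀ ht₀m t₁ ht₁) (iDbv t₀ t₁)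
    have e4 : (∫ t in t₀..t₁,
          (Gfun n J a b k (x t, η t) (ω * t) - meanG n J a b k (x t, η t)))
        = (∫ t in t₀..t₁, Gfun n J a b k (x t, η t) (ω * t))
          - ∫ t in t₀..t₁, meanG n J a b k (x t, η t) :=
      intervalIntegral.integral_sub (iΦ t₀ ht₀m t₁ ht₁) (iΨ t₀ ht₀m t₁ ht₁)
    rw [e1, e2, e3, e4]
    abel
  have hgoal : (∫ t in t₀..t₁,
        (Fbreve n J a b k (x t) + Ebreve n b k (η t) + (d t * b) • ditherV n k (ω * t)))
      = ∫ t in t₀..t₁,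
        (meanG n J a b k (x t, η t) + (d t * b) • ditherV n k (ω * t)) :=
    intervalIntegral.integral_congr fun t _ => by rw [meanG_eq hJc]
  rw [hgoal, hmain]
  -- splitting into periods
  set N : ℕ := ⌊(t₁ - t₀) / T⌋₊ with hNdef
  set sfun : ℕ → ℝ := fun j => t₀ + j * T with hsfun
  have hNT : (N : ℝ) * T ≤ t₁ - t₀ := by
    have h0 : 0 ≤ (t₁ - t₀) / T := div_nonneg (sub_nonneg.mpr ht₁.1) hTpos.le
    calc (N : ℝ) * T ≤ ((t₁ - t₀) / T) * T :=
          mul_le_mul_of_nonneg_right (Nat.floor_le h0) hTpos.le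
      _ = t₁ - t₀ := div_mul_cancel₀ _ hTpos.ne'
  have hltN : t₁ - t₀ < ((N : ℝ) + 1) * T := by
    have h1 : (t₁ - t₀) / T < (N : ℝ) + 1 := Nat.lt_floor_add_one _
    calc t₁ - t₀ = ((t₁ - t₀) / T) * T := (div_mul_cancel₀ _ hTpos.ne').symm
      _ < ((N : ℝ) + 1) * T := by
          exact mul_lt_mul_of_pos_right h1 hTpos
  have hsmem : ∀ j ≤ N, sfun j ∈ Icc t₀ t₁ := by
    intro j hj
    constructor
    · simp only [hsfun]
      have : (0:ℝ) ≤ (j : ℝ) * T := by positivity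
      linarith
    · simp only [hsfun]
      have : (j : ℝ) * T ≤ (N : ℝ) * T :=
        mul_le_mul_of_nonneg_right (by exact_mod_cast hj) hTpos.le
      linarith
  have hIcc₁ : Icc t₀ t₁ ⊆ Icc t₀ t₂ := Icc_subset_Icc le_rfl ht₁.2
  have hss : ∀ j : ℕ, sfun (j + 1) = sfun j + T := by
    intro j; simp only [hsfun]; push_cast; ring
  -- per-period bound
  have hper : ∀ j, j < N → ‖∫ t in sfun j..sfun (j + 1),
      (Gfun n J a b k (x t, η t) (ω * t) - meanG n J a b k (x t, η t))‖
      ≤ 2 * (LL * T) * T := by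
    intro j hj
    have hj1 : sfun j ∈ Icc t₀ t₂ := hIcc₁ (hsmem j hj.le)
    have hj2 : sfun (j + 1) ∈ Icc t₀ t₂ := hIcc₁ (hsmem (j + 1) hj)
    have hle : sfun j ≤ sfun (j + 1) := by rw [hss j]; linarith
    have hIsub : Set.uIoc (sfun j) (sfun (j + 1)) ⊆ Icc t₀ t₂ := hsubI _ hj1 _ hj2
    have hIoc' : Set.uIoc (sfun j) (sfun (j + 1)) = Ioc (sfun j) (sfun (j + 1)) := uIoc_of_le hle
    -- pointwise Lipschitz-in-time bound
    have hkey : ∀ t ∈ Set.uIoc (sfun j) (sfun (j + 1)), ∀ τ : ℝ,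
        ‖Gfun n J a b k (x t, η t) τ - Gfun n J a b k (x (sfun j), η (sfun j)) τ‖
          ≤ LL * T := by
      intro t ht τ
      have htmem : t ∈ Icc t₀ t₂ := hIsub ht
      rw [hIoc'] at ht
      have htd : |t - sfun j| ≤ T := by
        rw [abs_of_nonneg (by linarith [ht.1] : (0:ℝ) ≤ t - sfun j)]
        have := ht.2; rw [hss j] at this; linarith
    -- J is Lipschitz between the two shifted points
      have hJd : |J (x t + a • ditherU n k τ) - J (x (sfun j) + a • ditherU n k τ)|
          ≤ L * ‖x t - x (sfun j)‖ := by
        have := hLip _ (hmem t htmem τ) _ (hmem (sfun j) hj1 τ)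
        rwa [add_sub_add_right_eq_sub] at this
      refine (norm_Gfun_sub_le hb.le hJd).trans ?_
      have hx1 : ‖x t - x (sfun j)‖ ≤ M2 * T := by
        refine (hxlip (sfun j) hj1 t htmem).trans ?_
        exact mul_le_mul_of_nonneg_left htd hM2pos.le
      have hη1 : |η t - η (sfun j)| ≤ M3 * T := by
        refine (hηlip (sfun j) hj1 t htmem).trans ?_
        exact mul_le_mul_of_nonneg_left htd hM3pos.le
      calc (L * ‖x t - x (sfun j)‖ + |η t - η (sfun j)|) * b * sq
          ≤ (L * (M2 * T) + M3 * T) * b * sq := by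
            refine mul_le_mul_of_nonneg_right (mul_le_mul_of_nonneg_right ?_ hb.le) hsqpos.le
            exact add_le_add (mul_le_mul_of_nonneg_left hx1 hLnn) hη1
        _ = LL * T := by rw [hLLdef]; ring
    -- integrability bits
    have i1 := iΦ _ hj1 _ hj2
    have i2 : IntervalIntegrable (fun t => Gfun n J a b k (x (sfun j), η (sfun j)) (ω * t))
        volume (sfun j) (sfun (j + 1)) :=
      ((continuous_Gfun hJc _).comp (continuous_const.mul continuous_id)).intervalIntegrable _ _
    have i3 := iΨ _ hj1 _ hj2
    have hGω : (∫ t in sfun j..sfun (j + 1),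
          Gfun n J a b k (x (sfun j), η (sfun j)) (ω * t))
        = T • meanG n J a b k (x (sfun j), η (sfun j)) := by
      rw [hss j, hTdef]
      exact integral_Gfun_period hωpos.ne' _ _
    have hconst : (∫ _t in sfun j..sfun (j + 1), meanG n J a b k (x (sfun j), η (sfun j)))
        = T • meanG n J a b k (x (sfun j), η (sfun j)) := by
      rw [intervalIntegral.integral_const, hss j, add_sub_cancel_left]
    have hdec : (∫ t in sfun j..sfun (j + 1),
          (Gfun n J a b k (x t, η t) (ω * t) - meanG n J a b k (x t, η t)))
        = (∫ t in sfun j..sfun (j + 1),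
            (Gfun n J a b k (x t, η t) (ω * t)
              - Gfun n J a b k (x (sfun j), η (sfun j)) (ω * t)))
          + ∫ t in sfun j..sfun (j + 1),
            (meanG n J a b k (x (sfun j), η (sfun j)) - meanG n J a b k (x t, η t)) := by
      rw [intervalIntegral.integral_sub i1 i3, intervalIntegral.integral_sub i1 i2,
        intervalIntegral.integral_sub intervalIntegrable_const i3, hGω, hconst]
      abel
    rw [hdec]
    have habsT : |sfun (j + 1) - sfun j| = T := by
      rw [hss j, add_sub_cancel_left, abs_of_pos hTpos]
    have n1 : ‖∫ t in sfun j..sfun (j + 1),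
        (Gfun n J a b k (x t, η t) (ω * t)
          - Gfun n J a b k (x (sfun j), η (sfun j)) (ω * t))‖ ≤ (LL * T) * T := by
      have := intervalIntegral.norm_integral_le_of_norm_le_const
        (fun t ht => hkey t ht (ω * t))
      rwa [habsT] at this
    have n2 : ‖∫ t in sfun j..sfun (j + 1),
        (meanG n J a b k (x (sfun j), η (sfun j)) - meanG n J a b k (x t, η t))‖
        ≤ (LL * T) * T := by
      have hb2 : ∀ t ∈ Set.uIoc (sfun j) (sfun (j + 1)),
          ‖meanG n J a b k (x (sfun j), η (sfun j)) - meanG n J a b k (x t, η t)‖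
            ≤ LL * T := by
        intro t ht
        refine norm_meanG_sub_le hJc fun τ => ?_
        have := hkey t ht τ
        rwa [norm_sub_rev] at this
      have := intervalIntegral.norm_integral_le_of_norm_le_const hb2
      rwa [habsT] at this
    exact ((norm_add_le _ _).trans (add_le_add n1 n2)).trans (le_of_eq (by ring))
  -- tail bound
  have hsN : sfun N ∈ Icc t₀ t₁ := hsmem N le_rfl
  have hsN2 : sfun N ∈ Icc t₀ t₂ := hIcc₁ hsN
  have htail : ‖∫ t in sfun N..t₁,
      (Gfun n J a b k (x t, η t) (ω * t) - meanG n J a b k (x t, η t))‖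
      ≤ 2 * M1 * T := by
    have hb3 : ∀ t ∈ Set.uIoc (sfun N) t₁,
        ‖Gfun n J a b k (x t, η t) (ω * t) - meanG n J a b k (x t, η t)‖ ≤ 2 * M1 := by
      intro t ht
      have htmem : t ∈ Icc t₀ t₂ := hsubI _ hsN2 _ ht₁ ht
      have g1 : ‖Gfun n J a b k (x t, η t) (ω * t)‖ ≤ M1 := by
        have := norm_Gfun_le (p := (x t, η t)) (τ := ω * t) hb.le
          (hJbd t htmem (ω * t)) (hηbd t htmem)
        rwa [← hM1def] at this
      have g2 : ‖meanG n J a b k (x t, η t)‖ ≤ M1 := by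
        refine norm_meanG_le hJc fun τ => ?_
        have := norm_Gfun_le (p := (x t, η t)) (τ := τ) hb.le
          (hJbd t htmem τ) (hηbd t htmem)
        rwa [← hM1def] at this
      exact (norm_sub_le _ _).trans (by linarith)
    have h4 := intervalIntegral.norm_integral_le_of_norm_le_const hb3
    have habs : |t₁ - sfun N| ≤ T := by
      rw [abs_of_nonneg (sub_nonneg.mpr hsN.2)]
      simp only [hsfun]
      have := hltN
      have : t₁ - (t₀ + (N : ℝ) * T) ≤ T := by linarith
      linarith [this]
    calc ‖∫ t in sfun N..t₁,
        (Gfun n J a b k (x t, η t) (ω * t) - meanG n J a b k (x t, η t))‖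
        ≤ 2 * M1 * |t₁ - sfun N| := h4
      _ ≤ 2 * M1 * T := by
          exact mul_le_mul_of_nonneg_left habs (by positivity)
  -- assemble
  have hDint : ∀ u₁ ∈ Icc t₀ t₂, ∀ u₂ ∈ Icc t₀ t₂, IntervalIntegrable
      (fun t => Gfun n J a b k (x t, η t) (ω * t) - meanG n J a b k (x t, η t))
      volume u₁ u₂ := fun u₁ h1 u₂ h2 => (iΦ u₁ h1 u₂ h2).sub (iΨ u₁ h1 u₂ h2)
  have hsum := intervalIntegral.sum_integral_adjacent_intervals (μ := volume) (a := sfun)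
    (n := N)
    (f := fun t => Gfun n J a b k (x t, η t) (ω * t) - meanG n J a b k (x t, η t))
    (fun j hj => hDint _ (hIcc₁ (hsmem j hj.le)) _ (hIcc₁ (hsmem (j + 1) hj)))
  have hs0 : sfun 0 = t₀ := by simp [hsfun]
  have hsplit : (∫ t in t₀..t₁,
        (Gfun n J a b k (x t, η t) (ω * t) - meanG n J a b k (x t, η t)))
      = (∫ t in (sfun 0)..(sfun N),
          (Gfun n J a b k (x t, η t) (ω * t) - meanG n J a b k (x t, η t)))
        + ∫ t in sfun N..t₁,
          (Gfun n J a b k (x t, η t) (ω * t) - meanG n J a b k (x t, η t)) := by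
    rw [hs0]
    exact (intervalIntegral.integral_add_adjacent_intervals
      (hDint t₀ ht₀m _ hsN2) (hDint _ hsN2 t₁ ht₁)).symm
  rw [hsplit]
  have hsumb : ‖∫ t in (sfun 0)..(sfun N),
      (Gfun n J a b k (x t, η t) (ω * t) - meanG n J a b k (x t, η t))‖
      ≤ (N : ℝ) * (2 * (LL * T) * T) := by
    rw [← hsum]
    refine (norm_sum_le _ _).trans ?_
    have := Finset.sum_le_card_nsmul (Finset.range N)
      (fun j => ‖∫ t in sfun j..sfun (j + 1),
        (Gfun n J a b k (x t, η t) (ω * t) - meanG n J a b k (x t, η t))‖)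
      (2 * (LL * T) * T) (fun j hj => hper j (Finset.mem_range.mp hj))
    rwa [Finset.card_range, nsmul_eq_mul] at this
  have htot := (norm_add_le _ _).trans (add_le_add hsumb htail)
  refine htot.trans ?_
  -- final arithmetic
  have hTω : T * ω = 2 * π := by rw [hTdef]; field_simp
  rw [one_div, inv_mul_eq_div, le_div_iff₀ hωpos]
  have habs01 : |t₁ - t₀| = t₁ - t₀ := abs_of_nonneg (sub_nonneg.mpr ht₁.1)
  rw [habs01]
  have key1 : (N : ℝ) * (2 * (LL * T) * T) * ω = (N : ℝ) * T * (2 * LL) * (2 * π) := by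
    calc (N : ℝ) * (2 * (LL * T) * T) * ω = (N : ℝ) * T * (2 * LL) * (T * ω) := by ring
      _ = (N : ℝ) * T * (2 * LL) * (2 * π) := by rw [hTω]
  have key2 : 2 * M1 * T * ω = 4 * π * M1 := by
    calc 2 * M1 * T * ω = 2 * M1 * (T * ω) := by ring
      _ = 4 * π * M1 := by rw [hTω]; ring
  have key3 : (N : ℝ) * T * (2 * LL) * (2 * π) ≤ (t₁ - t₀) * (2 * LL) * (2 * π) := by
    have : (0:ℝ) ≤ (2 * LL) * (2 * π) := by positivity
    nlinarith [hNT]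
  calc ((N : ℝ) * (2 * (LL * T) * T) + 2 * M1 * T) * ω
      = (N : ℝ) * (2 * (LL * T) * T) * ω + 2 * M1 * T * ω := by ring
    _ = (N : ℝ) * T * (2 * LL) * (2 * π) + 4 * π * M1 := by rw [key1, key2]
    _ ≤ (t₁ - t₀) * (2 * LL) * (2 * π) + 4 * π * M1 := by linarith
    _ = 4 * π * M1 + 4 * π * LL * (t₁ - t₀) := by ring
end
end

section
/- Let d ≥ 1 and k ∈ ℕ. For every multi-index a = (a₁,…,a_d) ∈ {0,1,…,2^k−1}^d, define the interval i(a) := a₁ 2^{−k} + a₂ 2^{−2k} + ⋯ + a_d 2^{−dk} + [0, 2^{−dk}] ⊆ [0,1] and the cube c(a) := 2^{−k} a + [0, 2^{−k}]^d ⊆ [0,1]^d. Then γ_k maps the interior of i(a) into c(a), i.e., γ_k(int(i(a))) ⊆ c(a). -/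
open MeasureTheory Real Set Filter

noncomputable section

/-! In base `q = 2 ^ k`, the interval `i(a)` consists of the numbers `0.a₀a₁…a_{d-1}…`.
Multiplying by `q` shifts the expansion by one digit and changes the fractional part of the
further multiples `q ^ j σ` only by integers, so `saw (q ^ j σ) = 0.a_j…` lies in
`[a_j / q, (a_j + 1) / q]`. The open interval keeps the expansion away from the endpoints where
the digits would jump. -/

def ofDigitsFrac (q : ℕ) {d : ℕ} (a : Fin d → ℕ) : ℝ :=
  ∑ i, (a i : ℝ) / (q : ℝ) ^ ((i : ℕ) + 1)

section OfDigitsFrac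

variable {q d : ℕ}

lemma ofDigitsFrac_succ (a : Fin (d + 1) → ℕ) :
    ofDigitsFrac q a = (a 0 + ofDigitsFrac q (Fin.tail a)) / q := by
  simp only [ofDigitsFrac, Fin.sum_univ_succ, Fin.tail, Fin.val_zero, Fin.val_succ, add_div,
    Finset.sum_div, div_div, ← pow_succ, zero_add, pow_one]

lemma ofDigitsFrac_nonneg (a : Fin d → ℕ) : 0 ≤ ofDigitsFrac q a :=
  Finset.sum_nonneg fun _ _ => by positivity

lemma ofDigitsFrac_add_inv_pow_le_one (hq : 0 < q) (a : Fin d → ℕ) (ha : ∀ i, a i < q) :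
    ofDigitsFrac q a + ((q : ℝ) ^ d)⁻¹ ≤ 1 := by
  induction d with
  | zero => simp [ofDigitsFrac]
  | succ d ih =>
    have hq' : (0 : ℝ) < q := by exact_mod_cast hq
    have hlast : (a 0 : ℝ) + 1 ≤ q := by exact_mod_cast ha 0
    have htail := ih (Fin.tail a) fun i => ha i.succ
    rw [ofDigitsFrac_succ, pow_succ, mul_inv, div_add' _ _ _ hq'.ne', div_le_one hq',
      inv_mul_cancel_right₀ hq'.ne']
    linarith

lemma mem_Ioo_of_mem_Ioo_ofDigitsFrac (hq : 0 < q) (a : Fin (d + 1) → ℕ) (ha : ∀ i, a i < q)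
    {σ : ℝ} (hσ : σ ∈ Ioo (ofDigitsFrac q a) (ofDigitsFrac q a + ((q : ℝ) ^ (d + 1))⁻¹)) :
    σ ∈ Ioo ((a 0 : ℝ) / q) ((a 0 + 1) / q) := by
  have hq' : (0 : ℝ) < q := by exact_mod_cast hq
  have htail := ofDigitsFrac_add_inv_pow_le_one hq (Fin.tail a) fun i => ha i.succ
  have hS := ofDigitsFrac_nonneg (q := q) (Fin.tail a)
  rw [ofDigitsFrac_succ] at hσ
  obtain ⟨hlo, hhi⟩ := hσ
  constructor
  · exact (div_le_div_of_nonneg_right (by linarith) hq'.le).trans_lt hlo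
  · refine hhi.trans_le ?_
    rw [pow_succ, mul_inv, ← div_eq_mul_inv, ← add_div]
    exact div_le_div_of_nonneg_right (by linarith) hq'.le

lemma mul_sub_mem_Ioo_ofDigitsFrac_tail (hq : 0 < q) (a : Fin (d + 1) → ℕ)
    {σ : ℝ} (hσ : σ ∈ Ioo (ofDigitsFrac q a) (ofDigitsFrac q a + ((q : ℝ) ^ (d + 1))⁻¹)) :
    q * σ - a 0 ∈
      Ioo (ofDigitsFrac q (Fin.tail a)) (ofDigitsFrac q (Fin.tail a) + ((q : ℝ) ^ d)⁻¹) := by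
  have hq' : (0 : ℝ) < q := by exact_mod_cast hq
  rw [ofDigitsFrac_succ, pow_succ, mul_inv, ← div_eq_mul_inv, ← add_div] at hσ
  obtain ⟨hlo, hhi⟩ := hσ
  rw [div_lt_iff₀' hq'] at hlo
  rw [lt_div_iff₀' hq'] at hhi
  constructor <;> linarith

theorem fract_pow_mul_mem_Ioo (hq : 0 < q) (a : Fin d → ℕ) (ha : ∀ i, a i < q)
    {σ : ℝ} (hσ : σ ∈ Ioo (ofDigitsFrac q a) (ofDigitsFrac q a + ((q : ℝ) ^ d)⁻¹))
    (j : Fin d) :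
    Int.fract ((q : ℝ) ^ (j : ℕ) * σ) ∈ Ioo ((a j : ℝ) / q) ((a j + 1) / q) := by
  induction d generalizing σ with
  | zero => exact j.elim0
  | succ d ih =>
    induction j using Fin.cases with
    | zero =>
      have hq' : (0 : ℝ) < q := by exact_mod_cast hq
      have hσ₀ := mem_Ioo_of_mem_Ioo_ofDigitsFrac hq a ha hσ
      rw [Fin.val_zero, pow_zero, one_mul, Int.fract_eq_self.mpr]
      · exact hσ₀
      · constructor
        · exact (by positivity : (0 : ℝ) ≤ a 0 / q).trans hσ₀.1.le
        · refine hσ₀.2.trans_le ((div_le_one hq').mpr ?_)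
          exact_mod_cast ha 0
    | succ j =>
      have hshift : (q : ℝ) ^ ((j : ℕ) + 1) * σ =
          (q : ℝ) ^ (j : ℕ) * (q * σ - a 0) + ((q ^ (j : ℕ) * a 0 : ℕ) : ℝ) := by
        push_cast; ring
      rw [Fin.val_succ, hshift, Int.fract_add_natCast]
      exact ih (Fin.tail a) (fun i => ha i.succ) (mul_sub_mem_Ioo_ofDigitsFrac_tail hq a hσ) j

end OfDigitsFrac

theorem statement6_general (d : ℕ) (k : ℕ)
    (a : Fin d → ℕ) (ha : ∀ m, a m < 2 ^ k) :
    ∀ σ ∈ Ioo (∑ j : Fin d, (a j : ℝ) / 2 ^ (((j : ℕ) + 1) * k))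
        ((∑ j : Fin d, (a j : ℝ) / 2 ^ (((j : ℕ) + 1) * k)) + ((2:ℝ) ^ (d * k))⁻¹),
      ∀ j : Fin d, gammaCurve d k σ j ∈
        Icc ((a j : ℝ) / 2 ^ k) ((a j : ℝ) / 2 ^ k + ((2:ℝ) ^ k)⁻¹) := by
  intro σ hσ j
  have hpow (n : ℕ) : ((2 ^ k : ℕ) : ℝ) ^ n = 2 ^ (n * k) := by
    rw [Nat.cast_pow, Nat.cast_ofNat, ← pow_mul, mul_comm]
  have hsum : ofDigitsFrac (2 ^ k) a = ∑ j : Fin d, (a j : ℝ) / 2 ^ (((j : ℕ) + 1) * k) := by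
    simp only [ofDigitsFrac, hpow]
  rw [← hsum, ← hpow] at hσ
  have hfract := fract_pow_mul_mem_Ioo (Nat.two_pow_pos k) a ha hσ j
  have hq : ((2 ^ k : ℕ) : ℝ) = 2 ^ k := by norm_cast
  rw [hpow, hq, add_div, one_div] at hfract
  exact Ioo_subset_Icc_self hfract

/-- `γ_k` maps the interior of the subinterval `i(a)` into the subcube `c(a)`. -/
theorem statement6 (d : ℕ) (hd : 1 ≤ d) (k : ℕ) (hk : 1 ≤ k)
    (a : Fin d → ℕ) (ha : ∀ m, a m < 2 ^ k) :
    ∀ σ ∈ Ioo (∑ j : Fin d, (a j : ℝ) / 2 ^ (((j : ℕ) + 1) * k))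
        ((∑ j : Fin d, (a j : ℝ) / 2 ^ (((j : ℕ) + 1) * k)) + ((2:ℝ) ^ (d * k))⁻¹),
      ∀ j : Fin d, gammaCurve d k σ j ∈
        Icc ((a j : ℝ) / 2 ^ k) ((a j : ℝ) / 2 ^ k + ((2:ℝ) ^ k)⁻¹) :=
  statement6_general d k a ha
end
end

section
/- Let d ≥ 1, k ∈ ℕ, and let f : [0,1]^d → ℝ be continuous. For every multi-index a = (a₁,…,a_d) ∈ {0,1,…,2^k−1}^d, with I := a₁ 2^{−k} + a₂ 2^{−2k} + ⋯ + a_d 2^{−dk} + [0, 2^{−dk}] and C := 2^{−k} a + [0, 2^{−k}]^d, one has | ∫_C f(z) dz − ∫_I f(γ_k(σ)) dσ | ≤ 2^{−dk} · ω(f, √d / 2^k). -/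
open MeasureTheory Real Set Filter

noncomputable section

/-!
On `[s₀, s₀ + 2^{-dk})`, where `s₀ = ∑ a_j 2^{-(j+1)k}` has the base-`2^k` digits
`a₀, …, a_{d-1}`, multiplication by `2^{jk}` moves the first `j` digits into the integer part,
so the `j`-th coordinate `saw(2^{jk} σ)` of `γ_k` is an affine function of `σ` with values in
`[a_j 2^{-k}, (a_j + 1) 2^{-k})`. Thus `γ_k` maps the interval into the subcube `C`, and both
integrals are `2^{-dk}` times a number between the minimum and the maximum of `f` on `C`; these
are attained at two points of `C`, whose distance is at most `diam C = √d 2^{-k}`.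
-/

def euclideanBox {d : ℕ} (lo hi : Fin d → ℝ) : Set (EuclideanSpace ℝ (Fin d)) :=
  {z | ∀ j, z j ∈ Icc (lo j) (hi j)}

section EuclideanBox

variable {d : ℕ}

lemma euclideanBox_eq_preimage (lo hi : Fin d → ℝ) :
    euclideanBox lo hi = WithLp.ofLp ⁻¹' Icc lo hi := by
  ext z; simp [euclideanBox, Pi.le_def, forall_and]

lemma isCompact_euclideanBox (lo hi : Fin d → ℝ) : IsCompact (euclideanBox lo hi) := by
  rw [euclideanBox_eq_preimage]
  exact (PiLp.homeomorph 2 fun _ : Fin d => ℝ).isCompact_preimage.2 isCompact_Icc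

lemma measureReal_euclideanBox (lo : Fin d → ℝ) {c : ℝ} (hc : 0 ≤ c) :
    volume.real (euclideanBox lo fun j => lo j + c) = c ^ d := by
  rw [euclideanBox_eq_preimage, (PiLp.volume_preserving_ofLp (Fin d)).measureReal_preimage
    measurableSet_Icc.nullMeasurableSet, measureReal_def, Real.volume_Icc_pi_toReal]
  · simp
  · intro j; simp [hc]

lemma euclideanBox_subset_euclideanBox {lo hi lo' hi' : Fin d → ℝ} (hlo : lo' ≤ lo)
    (hhi : hi ≤ hi') :
    euclideanBox lo hi ⊆ euclideanBox lo' hi' :=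
  fun _ hz j => Icc_subset_Icc (hlo j) (hhi j) (hz j)

lemma norm_sub_le_of_mem_euclideanBox {lo : Fin d → ℝ} {c : ℝ} (hc : 0 ≤ c)
    {z ζ : EuclideanSpace ℝ (Fin d)} (hz : z ∈ euclideanBox lo fun j => lo j + c)
    (hζ : ζ ∈ euclideanBox lo fun j => lo j + c) :
    ‖z - ζ‖ ≤ √d * c := by
  have hcoord : ∀ j, |z j - ζ j| ≤ c := fun j => by
    rw [abs_sub_le_iff]; constructor <;> linarith [(hz j).1, (hz j).2, (hζ j).1, (hζ j).2]
  calc ‖z - ζ‖ = √(∑ j, |z j - ζ j| ^ 2) := by simp [EuclideanSpace.norm_eq]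
    _ ≤ √(∑ _j : Fin d, c ^ 2) := by gcongr with j; exact hcoord j
    _ = √d * c := by simp [Real.sqrt_mul, hc]

end EuclideanBox

lemma sub_le_modCont {d : ℕ} {f : EuclideanSpace ℝ (Fin d) → ℝ} (hf : ContinuousOn f (cube d))
    {ε : ℝ} {z ζ : EuclideanSpace ℝ (Fin d)} (hz : z ∈ cube d) (hζ : ζ ∈ cube d)
    (hzζ : ‖z - ζ‖ ≤ ε) : f z - f ζ ≤ modCont d f ε := by
  obtain ⟨B, hB⟩ := (isCompact_euclideanBox 0 1).exists_bound_of_continuousOn hf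
  refine (le_abs_self _).trans (le_csSup ⟨2 * B, ?_⟩ ⟨z, hz, ζ, hζ, hzζ, rfl⟩)
  rintro _ ⟨x, hx, y, hy, -, rfl⟩
  have := hB x hx
  have := hB y hy
  rw [Real.norm_eq_abs] at *
  linarith [abs_sub (f x) (f y)]

section Digits

open Finset

variable {b : ℕ} {A : ℕ → ℕ}

/-- The integer part of `b ^ j * ∑ i, A i / b ^ (i + 1)`, i.e. the number written with the
base-`b` digits `A 0, …, A (j - 1)`. -/
def digitsPrefix (b : ℕ) (A : ℕ → ℕ) (j : ℕ) : ℕ := ∑ i ∈ range j, A i * b ^ (j - 1 - i)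

lemma sum_digits_div_pow_le (n : ℕ) (hA : ∀ i < n, A i < b) :
    ∑ i ∈ range n, (A i : ℝ) / b ^ (i + 1) ≤ 1 - ((b : ℝ) ^ n)⁻¹ := by
  induction n with
  | zero => simp
  | succ n ih =>
    have hAn : (A n : ℝ) + 1 ≤ b := by exact_mod_cast hA n n.lt_succ_self
    have hb : (0 : ℝ) < b := by linarith [(A n).cast_nonneg (α := ℝ)]
    calc ∑ i ∈ range (n + 1), (A i : ℝ) / b ^ (i + 1)
        ≤ 1 - ((b : ℝ) ^ n)⁻¹ + (b - 1) / b ^ (n + 1) := by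
          rw [sum_range_succ]
          gcongr
          · exact ih fun i hi => hA i (by omega)
          · linarith
      _ = 1 - ((b : ℝ) ^ (n + 1))⁻¹ := by field_simp; ring

lemma pow_mul_sum_digits_div_pow (hb : b ≠ 0) {j n : ℕ} (hjn : j ≤ n) :
    (b : ℝ) ^ j * ∑ i ∈ range n, (A i : ℝ) / b ^ (i + 1)
      = digitsPrefix b A j + ∑ i ∈ range (n - j), (A (j + i) : ℝ) / b ^ (i + 1) := by
  obtain ⟨m, rfl⟩ := Nat.exists_eq_add_of_le hjn
  have hb' : (b : ℝ) ≠ 0 := by exact_mod_cast hb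
  rw [sum_range_add, mul_add, Nat.add_sub_cancel_left, digitsPrefix, mul_sum, mul_sum]
  push_cast
  congr 1 <;> refine sum_congr rfl fun i hi => ?_
  · have hij : i + 1 + (j - 1 - i) = j := by have := mem_range.1 hi; omega
    rw [show (b : ℝ) ^ j = b ^ (i + 1) * b ^ (j - 1 - i) by rw [← pow_add, hij]]
    field_simp
  · rw [show j + i + 1 = j + (i + 1) by ring, pow_add]
    field_simp

lemma pow_mul_sum_digits_sub_digitsPrefix_mem_Icc {j n : ℕ} (hA : ∀ i < n, A i < b)
    (hjn : j < n) :
    (b : ℝ) ^ j * ∑ i ∈ range n, (A i : ℝ) / b ^ (i + 1) - digitsPrefix b A j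
      ∈ Icc ((A j : ℝ) / b) ((A j + 1) / b - (b : ℝ) ^ j * ((b : ℝ) ^ n)⁻¹) := by
  have hb : 0 < b := (hA 0 (by omega)).pos
  obtain ⟨m, rfl⟩ : ∃ m, n = j + (m + 1) := ⟨n - j - 1, by omega⟩
  rw [pow_mul_sum_digits_div_pow hb.ne' (by omega), add_sub_cancel_left, Nat.add_sub_cancel_left,
    sum_range_succ']
  have htail := sum_digits_div_pow_le (A := fun i => A (j + 1 + i)) m
    fun i hi => hA _ (by omega)
  have hshift : ∑ i ∈ range m, (A (j + (i + 1)) : ℝ) / b ^ (i + 1 + 1)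
      = (∑ i ∈ range m, (A (j + 1 + i) : ℝ) / b ^ (i + 1)) / b := by
    rw [sum_div]
    refine sum_congr rfl fun i _ => ?_
    rw [show j + (i + 1) = j + 1 + i by ring, pow_succ]
    field_simp
  have hspare : (b : ℝ) ^ j * ((b : ℝ) ^ (j + (m + 1)))⁻¹ = ((b : ℝ) ^ m)⁻¹ / b := by
    rw [pow_add, pow_succ]
    field_simp
  rw [hshift, hspare, add_zero, pow_one]
  refine ⟨le_add_of_nonneg_left (by positivity), ?_⟩
  rw [← add_div, ← sub_div]
  gcongr
  linarith

lemma pow_mul_sub_digitsPrefix_mem_Ico {j n : ℕ} (hA : ∀ i < n, A i < b) (hjn : j < n) {σ : ℝ}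
    (hσ : σ ∈ Ico (∑ i ∈ range n, (A i : ℝ) / b ^ (i + 1))
      (∑ i ∈ range n, (A i : ℝ) / b ^ (i + 1) + ((b : ℝ) ^ n)⁻¹)) :
    (b : ℝ) ^ j * σ - digitsPrefix b A j ∈ Ico ((A j : ℝ) / b) ((A j + 1) / b) := by
  have hx := pow_mul_sum_digits_sub_digitsPrefix_mem_Icc hA hjn
  have hbj : (0 : ℝ) < (b : ℝ) ^ j := pow_pos (by exact_mod_cast (hA 0 (by omega)).pos) j
  have h₁ := mul_nonneg hbj.le (sub_nonneg.2 hσ.1)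
  have h₂ := mul_lt_mul_of_pos_left (sub_lt_iff_lt_add'.2 hσ.2) hbj
  constructor <;> nlinarith [hx.1, hx.2]

end Digits

lemma setIntegral_mem_Icc {X : Type*} [MeasurableSpace X] {μ : Measure X} {s : Set X} {g : X → ℝ}
    {m M : ℝ} (hs : MeasurableSet s) (hμs : μ s ≠ ⊤) (hg : IntegrableOn g s μ)
    (hgs : ∀ x ∈ s, g x ∈ Icc m M) :
    ∫ x in s, g x ∂μ ∈ Icc (m * μ.real s) (M * μ.real s) := by
  refine ⟨setIntegral_ge_of_const_le_real hs hμs (fun x hx => (hgs x hx).1) hg, ?_⟩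
  simpa [mul_comm] using setIntegral_mono_on hg (integrableOn_const hμs) hs fun x hx => (hgs x hx).2

lemma intervalIntegral_mem_Icc_of_eqOn {E : Type*} [TopologicalSpace E] {F : E → ℝ} {C : Set E}
    {g L : ℝ → E} {s V m M : ℝ} (hV : 0 ≤ V) (hL : ContinuousOn L (Icc s (s + V)))
    (hgL : EqOn g L (Ioo s (s + V))) (hLC : MapsTo L (Icc s (s + V)) C) (hF : ContinuousOn F C)
    (hFC : ∀ z ∈ C, F z ∈ Icc m M) :
    ∫ σ in s..s + V, F (g σ) ∈ Icc (m * V) (M * V) := by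
  have hFL : IntegrableOn (F ∘ L) (Icc s (s + V)) :=
    (hF.comp hL hLC).integrableOn_compact isCompact_Icc
  rw [intervalIntegral.integral_of_le (by linarith), integral_Ioc_eq_integral_Ioo]
  have := setIntegral_mem_Icc (μ := volume) measurableSet_Ioo measure_Ioo_lt_top.ne
    ((hFL.mono_set Ioo_subset_Icc_self).congr_fun (fun σ hσ => congrArg F (hgL hσ).symm)
      measurableSet_Ioo)
    (fun σ hσ => hgL hσ ▸ hFC _ (hLC (Ioo_subset_Icc_self hσ)))
  simpa [Real.volume_real_Ioo_of_le (by linarith : s ≤ s + V)] using this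

def subcube {d : ℕ} (k : ℕ) (a : Fin d → ℕ) : Set (EuclideanSpace ℝ (Fin d)) :=
  euclideanBox (fun j => (a j : ℝ) / 2 ^ k) fun j => (a j : ℝ) / 2 ^ k + ((2 : ℝ) ^ k)⁻¹

def subintervalStart {d : ℕ} (k : ℕ) (a : Fin d → ℕ) : ℝ :=
  ∑ j : Fin d, (a j : ℝ) / 2 ^ (((j : ℕ) + 1) * k)

lemma div_pow_add_inv_le_one {k n : ℕ} (hn : n < 2 ^ k) :
    (n : ℝ) / 2 ^ k + ((2 : ℝ) ^ k)⁻¹ ≤ 1 := by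
  have : (n : ℝ) + 1 ≤ 2 ^ k := by exact_mod_cast hn
  calc (n : ℝ) / 2 ^ k + ((2 : ℝ) ^ k)⁻¹ = (n + 1) / 2 ^ k := by ring
    _ ≤ 1 := (div_le_one (by positivity)).2 this

lemma subcube_subset_cube {d k : ℕ} {a : Fin d → ℕ} (ha : ∀ j, a j < 2 ^ k) :
    subcube k a ⊆ cube d :=
  euclideanBox_subset_euclideanBox (fun j => by positivity) fun j => div_pow_add_inv_le_one (ha j)

lemma exists_continuous_eqOn_gammaCurve {d k : ℕ} {a : Fin d → ℕ} (ha : ∀ j, a j < 2 ^ k) :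
    ∃ L : ℝ → EuclideanSpace ℝ (Fin d), Continuous L ∧
      EqOn (gammaCurve d k) L
        (Ico (subintervalStart k a) (subintervalStart k a + ((2 : ℝ) ^ (d * k))⁻¹)) ∧
      MapsTo L (Icc (subintervalStart k a) (subintervalStart k a + ((2 : ℝ) ^ (d * k))⁻¹))
        (subcube k a) := by
  set A : ℕ → ℕ := fun i => if h : i < d then a ⟨i, h⟩ else 0
  have hA : ∀ i < d, A i < 2 ^ k := fun i hi => by simp [A, hi, ha]
  have hcast : ((2 ^ k : ℕ) : ℝ) = 2 ^ k := by push_cast; rfl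
  have hs₀ : subintervalStart k a
      = ∑ i ∈ Finset.range d, (A i : ℝ) / ((2 ^ k : ℕ) : ℝ) ^ (i + 1) := by
    rw [subintervalStart, ← Fin.sum_univ_eq_sum_range]
    simp [A, pow_mul']
  have hV : ((2 : ℝ) ^ (d * k))⁻¹ = (((2 ^ k : ℕ) : ℝ) ^ d)⁻¹ := by rw [hcast, pow_mul']
  set L : ℝ → EuclideanSpace ℝ (Fin d) :=
    fun σ => WithLp.toLp 2 fun j => (2 : ℝ) ^ ((j : ℕ) * k) * σ - digitsPrefix (2 ^ k) A j
  have hLcont : Continuous L := by fun_prop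
  have hdigit : ∀ σ ∈ Ico (subintervalStart k a) (subintervalStart k a + ((2 : ℝ) ^ (d * k))⁻¹),
      ∀ j : Fin d, L σ j ∈ Ico ((a j : ℝ) / 2 ^ k) ((a j : ℝ) / 2 ^ k + ((2 : ℝ) ^ k)⁻¹) := by
    intro σ hσ j
    rw [hs₀, hV] at hσ
    have := pow_mul_sub_digitsPrefix_mem_Ico hA j.isLt hσ
    simpa [L, A, hcast, pow_mul', add_div] using this
  refine ⟨L, hLcont, fun σ hσ => ?_, ?_⟩
  · ext j
    have h := hdigit σ hσ j
    refine Int.fract_eq_iff.2 ⟨(by positivity : (0 : ℝ) ≤ a j / 2 ^ k).trans h.1,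
      h.2.trans_le (div_pow_add_inv_le_one (ha j)), digitsPrefix (2 ^ k) A j, by simp [L]⟩
  · have hIco : MapsTo L (Ico _ _) (subcube k a) :=
      fun σ hσ j => Ico_subset_Icc_self (hdigit σ hσ j)
    have hne : subintervalStart k a ≠ subintervalStart k a + ((2 : ℝ) ^ (d * k))⁻¹ := by simp
    simpa [closure_Ico hne] using hIco.closure_left hLcont (isCompact_euclideanBox _ _).isClosed

theorem statement7_general (d : ℕ) (k : ℕ)
    (f : EuclideanSpace ℝ (Fin d) → ℝ) (hf : ContinuousOn f (cube d))
    (a : Fin d → ℕ) (ha : ∀ m, a m < 2 ^ k) :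
    |(∫ z in {z : EuclideanSpace ℝ (Fin d) | ∀ j : Fin d,
          z j ∈ Icc ((a j : ℝ) / 2 ^ k) ((a j : ℝ) / 2 ^ k + ((2:ℝ) ^ k)⁻¹)}, f z) -
        ∫ σ in (∑ j : Fin d, (a j : ℝ) / 2 ^ (((j : ℕ) + 1) * k))..
          ((∑ j : Fin d, (a j : ℝ) / 2 ^ (((j : ℕ) + 1) * k)) + ((2:ℝ) ^ (d * k))⁻¹),
          f (gammaCurve d k σ)| ≤
      ((2:ℝ) ^ (d * k))⁻¹ * modCont d f (Real.sqrt d / 2 ^ k) := by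
  change |(∫ z in subcube k a, f z) - ∫ σ in subintervalStart k a..subintervalStart k a +
    ((2 : ℝ) ^ (d * k))⁻¹, f (gammaCurve d k σ)| ≤ _
  obtain ⟨L, hL, hγL, hLC⟩ := exists_continuous_eqOn_gammaCurve ha
  have hC := subcube_subset_cube ha
  have hCcpt : IsCompact (subcube k a) := isCompact_euclideanBox _ _
  have hCne : (subcube k a).Nonempty := ⟨_, hLC (left_mem_Icc.2 (by simp))⟩
  obtain ⟨zM, hzM, hmax⟩ := hCcpt.exists_isMaxOn hCne (hf.mono hC)
  obtain ⟨zm, hzm, hmin⟩ := hCcpt.exists_isMinOn hCne (hf.mono hC)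
  have hbound : ∀ z ∈ subcube k a, f z ∈ Icc (f zm) (f zM) := fun z hz => ⟨hmin hz, hmax hz⟩
  have hvol : volume.real (subcube k a) = ((2 : ℝ) ^ (d * k))⁻¹ := by
    rw [subcube, measureReal_euclideanBox _ (by positivity), inv_pow, ← pow_mul, mul_comm]
  have hcube := setIntegral_mem_Icc hCcpt.isClosed.measurableSet
    (hCcpt.measure_lt_top (μ := volume)).ne ((hf.mono hC).integrableOn_compact hCcpt) hbound
  have hcurve := intervalIntegral_mem_Icc_of_eqOn (by positivity) hL.continuousOn
    (hγL.mono Ioo_subset_Ico_self) hLC (hf.mono hC) hbound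
  have hω : f zM - f zm ≤ modCont d f (√d / 2 ^ k) := sub_le_modCont hf (hC hzM) (hC hzm) <| by
    simpa [div_eq_mul_inv] using norm_sub_le_of_mem_euclideanBox (by positivity) hzM hzm
  rw [hvol] at hcube
  calc _ ≤ ((2 : ℝ) ^ (d * k))⁻¹ * (f zM - f zm) :=
        abs_sub_le_iff.2 ⟨by linarith [hcube.2, hcurve.1], by linarith [hcube.1, hcurve.2]⟩
    _ ≤ _ := mul_le_mul_of_nonneg_left hω (by positivity)

/-- on each subcube/subinterval pair, the two integrals differ by at most
`2^{-dk} ω(f, √d/2^k)`. -/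
theorem statement7 (d : ℕ) (hd : 1 ≤ d) (k : ℕ) (hk : 1 ≤ k)
    (f : EuclideanSpace ℝ (Fin d) → ℝ) (hf : ContinuousOn f (cube d))
    (a : Fin d → ℕ) (ha : ∀ m, a m < 2 ^ k) :
    |(∫ z in {z : EuclideanSpace ℝ (Fin d) | ∀ j : Fin d,
          z j ∈ Icc ((a j : ℝ) / 2 ^ k) ((a j : ℝ) / 2 ^ k + ((2:ℝ) ^ k)⁻¹)}, f z) -
        ∫ σ in (∑ j : Fin d, (a j : ℝ) / 2 ^ (((j : ℕ) + 1) * k))..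
          ((∑ j : Fin d, (a j : ℝ) / 2 ^ (((j : ℕ) + 1) * k)) + ((2:ℝ) ^ (d * k))⁻¹),
          f (gammaCurve d k σ)| ≤
      ((2:ℝ) ^ (d * k))⁻¹ * modCont d f (Real.sqrt d / 2 ^ k) :=
  statement7_general d k f hf a ha
end
end
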